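/- arXiv:1506.02356 — 4 statements merged into one kernel-verified Lean document; each statement's English description precedes it below -/
import Mathlib

section
/- (Vaserstein's lemma) Let A be a commutative ring, n ≥ 3, and let a, b, c ∈ A^n with a·b^t = a·c^t = 1. Then the matrix α = I_n + (c − b)^t a has determinant 1 and satisfies α b^t = c^t; moreover, the matrix β(X) = I_n + (c − b)^t a X over A[X] satisfies β(0) = I_n and β(1) = α, so α is connected to the identity. -/
/-!
Write `u = c - b`. Since `a·b^t = a·c^t`, the vector `u` is orthogonal to `a`, so by the matrix
determinant lemma `det (I + u^t a) = 1 + a·u^t = 1`; and `(I + u^t a) b^t = b^t + (a·b^t) u^t = c^t`.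
The path `β(X)` is the same rank-one perturbation scaled by `X`.
-/

open Polynomial

namespace Matrix

variable {m R : Type*} [DecidableEq m]

theorem det_one_add_vecMulVec [Fintype m] [CommRing R] (u v : m → R) :
    (1 + vecMulVec u v).det = 1 + v ⬝ᵥ u := by
  rw [vecMulVec_eq (Fin 1), det_one_add_replicateCol_mul_replicateRow]

theorem one_add_vecMulVec_mulVec [Fintype m] [CommSemiring R] (u v w : m → R) :
    (1 + vecMulVec u v) *ᵥ w = w + (v ⬝ᵥ w) • u := by
  rw [add_mulVec, one_mulVec, vecMulVec_mulVec, op_smul_eq_smul]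

theorem map_eval_one_add_vecMulVec_C_mul_X [CommSemiring R] (u v : m → R) (x : R) :
    (1 + vecMulVec (fun i => C (u i)) (fun j => C (v j) * X)).map (eval x) =
      1 + x • vecMulVec u v := by
  rw [Matrix.map_add _ (fun _ _ => eval_add), Matrix.map_one _ eval_zero eval_one]
  congr 1
  ext i j
  simp only [map_apply, vecMulVec_apply, smul_apply, eval_mul, eval_C, eval_X, smul_eq_mul]
  ring

end Matrix

theorem stmt_5_general {A : Type*} [CommRing A] {n : ℕ} (a b c : Fin n → A)
    (hab : ∑ i, a i * b i = 1) (hac : ∑ i, a i * c i = 1) :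
    (1 + Matrix.vecMulVec (c - b) a).det = 1 ∧
    (1 + Matrix.vecMulVec (c - b) a).mulVec b = c ∧
    (1 + Matrix.vecMulVec (fun i => C (c i - b i)) (fun i => C (a i) * X)).map
        (Polynomial.eval 0) = 1 ∧
    (1 + Matrix.vecMulVec (fun i => C (c i - b i)) (fun i => C (a i) * X)).map
        (Polynomial.eval 1) = 1 + Matrix.vecMulVec (c - b) a := by
  change a ⬝ᵥ b = 1 at hab
  change a ⬝ᵥ c = 1 at hac
  have horth : a ⬝ᵥ (c - b) = 0 := by rw [dotProduct_sub, hab, hac, sub_self]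
  refine ⟨?_, ?_, ?_, ?_⟩
  · rw [Matrix.det_one_add_vecMulVec, horth, add_zero]
  · rw [Matrix.one_add_vecMulVec_mulVec, hab, one_smul, add_sub_cancel]
  · simpa using Matrix.map_eval_one_add_vecMulVec_C_mul_X (c - b) a 0
  · simpa using Matrix.map_eval_one_add_vecMulVec_C_mul_X (c - b) a 1

theorem stmt_5 {A : Type*} [CommRing A] {n : ℕ} (hn : 3 ≤ n) (a b c : Fin n → A)
    (hab : ∑ i, a i * b i = 1) (hac : ∑ i, a i * c i = 1) :
    (1 + Matrix.vecMulVec (c - b) a).det = 1 ∧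
    (1 + Matrix.vecMulVec (c - b) a).mulVec b = c ∧
    (1 + Matrix.vecMulVec (fun i => C (c i - b i)) (fun i => C (a i) * X)).map
        (Polynomial.eval 0) = 1 ∧
    (1 + Matrix.vecMulVec (fun i => C (c i - b i)) (fun i => C (a i) * X)).map
        (Polynomial.eval 1) = 1 + Matrix.vecMulVec (c - b) a :=
  stmt_5_general a b c hab hac
end

section
/- Let A = ℝ[X, Y]/(X² + Y² − 1) with x, y the images of X, Y. Then the unimodular row (x, y) ∈ A² cannot be lifted to a unimodular row over ℝ[X, Y]: there is no matrix β ∈ SL_2(ℝ[X,Y]) reducing modulo (X² + Y² − 1) to the matrix [[x, y], [−y, x]]. -/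
/-!
Since `ℂ` is simply connected, a continuous nonvanishing `F : ℂ → ℂ` lifts through the covering
`exp : ℂ → ℂ \ {0}`. If `F z = z` on the unit circle, the lift restricted to `t ↦ exp (t i)` is
a continuous logarithm of `exp (t i)`, hence equals `t i + const`, which is not `2π`-periodic.
A matrix `β` as in the statement would produce such an `F`, namely `F = β₀₀ + β₀₁ i` evaluated
at `(Re z, Im z)`: it has no zero because `β₀₀ β₁₁ - β₀₁ β₁₀ = 1`, and it is the identity on
the circle because `β₀₀ ≡ X` and `β₀₁ ≡ Y` modulo `X² + Y² - 1`.
-/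

open MvPolynomial

/-- The defining polynomial of the circle, `X² + Y² - 1`. -/
noncomputable def circlePoly : MvPolynomial (Fin 2) ℝ :=
  X 0 ^ 2 + X 1 ^ 2 - 1

/-- The canonical surjection `ℝ[X,Y] → ℝ[X,Y]/(X² + Y² - 1)`. -/
noncomputable def circleMk :
    MvPolynomial (Fin 2) ℝ →+* MvPolynomial (Fin 2) ℝ ⧸ Ideal.span {circlePoly} :=
  Ideal.Quotient.mk (Ideal.span {circlePoly})

theorem Complex.exists_eq_zero_of_continuous_of_eqOn_sphere {F : ℂ → ℂ} (hF : Continuous F)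
    (hF_circle : Set.EqOn F id (Metric.sphere 0 1)) : ∃ z, F z = 0 := by
  by_contra! hF_ne
  let F' : C(ℂ, {z : ℂ // z ≠ 0}) := ⟨fun z ↦ ⟨F z, hF_ne z⟩, hF.subtype_mk _⟩
  obtain ⟨L, -, hL⟩ := (isCoveringMap_exp.existsUnique_continuousMap_lifts F' 0 (log (F 0))
    (Subtype.ext (exp_log (hF_ne 0)))).exists
  have hexpL (z : ℂ) : exp (L z) = F z := congrArg Subtype.val (congrFun hL z)
  have hloop : (fun t : ℝ ↦ L (exp (t * I))) = fun t : ℝ ↦ t * I + L 1 := by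
    refine isCoveringMap_exp.eq_of_comp_eq (by fun_prop) (by fun_prop) ?_ 0 (by simp)
    funext t
    refine Subtype.ext ?_
    simp only [Function.comp_apply, exp_add, hexpL, hF_circle (show (1 : ℂ) ∈ _ by simp)]
    rw [hF_circle (show exp (t * I) ∈ _ by simp), id, id, mul_one]
  have hperiod := congrFun hloop (2 * Real.pi)
  push_cast at hperiod
  rw [exp_two_pi_mul_I, right_eq_add] at hperiod
  exact two_pi_I_ne_zero hperiod

theorem RingHom.eq_of_mk_span_singleton_eq {R S : Type*} [CommRing R] [Ring S] (φ : R →+* S)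
    {r a b : R} (hr : φ r = 0)
    (h : Ideal.Quotient.mk (Ideal.span {r}) a = Ideal.Quotient.mk (Ideal.span {r}) b) :
    φ a = φ b := by
  have hker : Ideal.span {r} ≤ RingHom.ker φ := Ideal.span_singleton_le_iff_mem _ |>.mpr hr
  exact sub_eq_zero.mp <| map_sub φ a b ▸ hker (Ideal.Quotient.eq.mp h)

theorem eval_eq_of_circleMk_eq {p q : MvPolynomial (Fin 2) ℝ} (h : circleMk p = circleMk q)
    {v : Fin 2 → ℝ} (hv : v 0 ^ 2 + v 1 ^ 2 = 1) : eval v p = eval v q :=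
  (eval v).eq_of_mk_span_singleton_eq (by simp [circlePoly, hv]) h

theorem continuous_eval_re_im (p : MvPolynomial (Fin 2) ℝ) :
    Continuous fun z : ℂ ↦ (eval ![z.re, z.im] p : ℂ) :=
  Complex.continuous_ofReal.comp <|
    (continuous_eval p).comp <| continuous_pi fun i ↦ by fin_cases i <;> simp <;> fun_prop

theorem stmt_11 :
    ¬ ∃ β : Matrix (Fin 2) (Fin 2) (MvPolynomial (Fin 2) ℝ),
        β.det = 1 ∧
        β.map circleMk =
          !![circleMk (X 0), circleMk (X 1); -circleMk (X 1), circleMk (X 0)] := by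
  rintro ⟨β, hdet, hmap⟩
  have hβ₀₀ : circleMk (β 0 0) = circleMk (X 0) := by simpa using congrFun (congrFun hmap 0) 0
  have hβ₀₁ : circleMk (β 0 1) = circleMk (X 1) := by simpa using congrFun (congrFun hmap 0) 1
  obtain ⟨z, hz⟩ := Complex.exists_eq_zero_of_continuous_of_eqOn_sphere
    (F := fun z ↦ eval ![z.re, z.im] (β 0 0) + eval ![z.re, z.im] (β 0 1) * Complex.I)
    ((continuous_eval_re_im _).add ((continuous_eval_re_im _).mul continuous_const))
    fun z hz ↦ by
      have hv : z.re ^ 2 + z.im ^ 2 = 1 := by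
        linarith [mem_sphere_zero_iff_norm.mp hz ▸ Complex.sq_norm_sub_sq_re z]
      simp only [eval_eq_of_circleMk_eq (v := ![z.re, z.im]) hβ₀₀ hv,
        eval_eq_of_circleMk_eq (v := ![z.re, z.im]) hβ₀₁ hv, eval_X]
      exact Complex.re_add_im z
  obtain ⟨hβ₀₀_z, hβ₀₁_z⟩ :
      eval ![z.re, z.im] (β 0 0) = 0 ∧ eval ![z.re, z.im] (β 0 1) = 0 := by
    simpa [Complex.ext_iff] using hz
  simpa [Matrix.det_fin_two, hβ₀₀_z, hβ₀₁_z] using congrArg (eval ![z.re, z.im]) hdet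
end

section
/- Let A = ℝ[X, Y, Z]/(X² + Y² + Z² − 1). If the unimodular row (x, y, z) were completable to a matrix in GL_3(A), then the kernel P of the map A³ → A given by (x, y, z) would be free of rank 2, and a surjection P → A would yield polynomials h_1, h_2, h_3 with x h_1 + y h_2 + z h_3 = 0 in A and ⟨h_1, h_2, h_3⟩ = A; evaluating at points of S² gives a nowhere-vanishing continuous tangent vector field on S². -/
/-!
Invert the completing matrix `M`. Since `M` is an automorphism of `A³` carrying the kernel `P`
of the row `(x, y, z) = M₀` onto the vectors with vanishing first coordinate, `P ≅ A²`. The second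
column `c` of `M⁻¹` satisfies `M₀ ⬝ c = 0` and `M₁ ⬝ c = 1`, so lifts `h` of its entries are a
tangent field whose components generate the unit ideal; at a point `p ∈ S²` evaluation is a ring
map `A → ℝ`, so `M₁(p) ⬝ h(p) = 1` and the field does not vanish at `p`.
-/

open MvPolynomial

/-- The defining polynomial of the 2-sphere, `X² + Y² + Z² - 1`. -/
noncomputable def spherePoly : MvPolynomial (Fin 3) ℝ :=
  X 0 ^ 2 + X 1 ^ 2 + X 2 ^ 2 - 1

/-- The coordinate ring `ℝ[X,Y,Z]/(X² + Y² + Z² - 1)` of the real 2-sphere. -/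
abbrev SphereRing : Type _ := MvPolynomial (Fin 3) ℝ ⧸ Ideal.span {spherePoly}

/-- The canonical surjection onto the coordinate ring of the sphere. -/
noncomputable def sphereMk : MvPolynomial (Fin 3) ℝ →+* SphereRing :=
  Ideal.Quotient.mk (Ideal.span {spherePoly})

/-- The linear map `A³ → A` given by the row `(x, y, z)`. -/
noncomputable def sphereRow : (Fin 3 → SphereRing) →ₗ[SphereRing] (Fin 1 → SphereRing) :=
  (Matrix.of ![![sphereMk (X 0), sphereMk (X 1), sphereMk (X 2)]]).mulVecLin

noncomputable def LinearMap.kerCompEquiv {R M M₂ N : Type*} [Semiring R] [AddCommMonoid M]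
    [AddCommMonoid M₂] [AddCommMonoid N] [Module R M] [Module R M₂] [Module R N]
    (g : M₂ →ₗ[R] N) (e : M ≃ₗ[R] M₂) :
    LinearMap.ker (g ∘ₗ e.toLinearMap) ≃ₗ[R] LinearMap.ker g :=
  (LinearEquiv.ofEq _ _ (LinearMap.ker_comp _ _)).trans (e.ofSubmodule' _)

noncomputable def kerProjZeroEquiv (R : Type*) [Semiring R] (n : ℕ) :
    LinearMap.ker (LinearMap.proj 0 : (Fin (n + 1) → R) →ₗ[R] R) ≃ₗ[R] (Fin n → R) :=
  (LinearMap.kerCompEquiv _ (Fin.consLinearEquiv R fun _ => R)).symm.trans <|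
    (LinearEquiv.ofEq _ _ (LinearMap.ker_fst R R (Fin n → R))).trans <|
      (LinearEquiv.ofInjective _ LinearMap.inr_injective).symm

theorem ker_rowMulVecLin_eq_ker_proj_comp {R : Type*} [CommSemiring R] {n : ℕ}
    (M : Matrix (Fin (n + 1)) (Fin (n + 1)) R) {r : Fin (n + 1) → R} (hr : M 0 = r) :
    LinearMap.ker (Matrix.of ![r]).mulVecLin = LinearMap.ker (LinearMap.proj 0 ∘ₗ M.mulVecLin) := by
  ext v
  simp [funext_iff, Matrix.mulVec, hr]

theorem nonempty_ker_rowMulVecLin_equiv {R : Type*} [CommRing R] {n : ℕ}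
    (M : Matrix (Fin (n + 1)) (Fin (n + 1)) R) (hM : IsUnit M) :
    Nonempty (LinearMap.ker (Matrix.of ![M 0]).mulVecLin ≃ₗ[R] (Fin n → R)) :=
  ⟨(LinearEquiv.ofEq _ _ (ker_rowMulVecLin_eq_ker_proj_comp M rfl)).trans <|
    (LinearMap.kerCompEquiv _ (M.toLinearEquiv' hM.invertible)).trans (kerProjZeroEquiv R n)⟩

theorem Matrix.exists_dotProduct_row_eq_zero_and_eq_one {R : Type*} [CommRing R] {n : ℕ}
    (M : Matrix (Fin (n + 2)) (Fin (n + 2)) R) (hM : IsUnit M) :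
    ∃ c : Fin (n + 2) → R, M 0 ⬝ᵥ c = 0 ∧ M 1 ⬝ᵥ c = 1 := by
  have hinv := M.mul_nonsing_inv (M.isUnit_iff_isUnit_det.1 hM)
  refine ⟨fun j => M⁻¹ j 1, ?_, ?_⟩
  · rw [← Matrix.mul_apply', hinv, Matrix.one_apply_ne zero_ne_one]
  · rw [← Matrix.mul_apply', hinv, Matrix.one_apply_eq]

theorem Ideal.span_range_eq_top_of_dotProduct_eq_one {R ι : Type*} [CommSemiring R] [Fintype ι]
    {s c : ι → R} (h : s ⬝ᵥ c = 1) : Ideal.span (Set.range c) = ⊤ :=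
  (Ideal.eq_top_iff_one _).2 <|
    Submodule.mem_span_range_iff_exists_fun R |>.2 ⟨s, by simpa [dotProduct] using h⟩

theorem exists_ne_zero_of_dotProduct_eq_one {S ι : Type*} [Semiring S] [Nontrivial S]
    [Fintype ι] {s c : ι → S} (h : s ⬝ᵥ c = 1) : ∃ i, c i ≠ 0 := by
  by_contra! hc
  rw [show c = 0 from funext hc, dotProduct_zero] at h
  exact zero_ne_one h

theorem sphereMk_surjective : Function.Surjective sphereMk :=
  Ideal.Quotient.mk_surjective

noncomputable def sphereEval (p : Fin 3 → ℝ) (hp : p 0 ^ 2 + p 1 ^ 2 + p 2 ^ 2 = 1) :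
    SphereRing →+* ℝ :=
  Ideal.Quotient.lift _ (eval p) fun q hq => by
    obtain ⟨r, rfl⟩ := Ideal.mem_span_singleton'.1 hq
    simp [spherePoly, hp]

@[simp]
theorem sphereEval_sphereMk (p : Fin 3 → ℝ) (hp : p 0 ^ 2 + p 1 ^ 2 + p 2 ^ 2 = 1)
    (q : MvPolynomial (Fin 3) ℝ) : sphereEval p hp (sphereMk q) = eval p q :=
  rfl

theorem stmt_13
    (hcompl : ∃ M : Matrix (Fin 3) (Fin 3) SphereRing,
        IsUnit M ∧ M 0 = ![sphereMk (X 0), sphereMk (X 1), sphereMk (X 2)]) :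
    -- the kernel `P` is free of rank 2
    Nonempty (LinearMap.ker sphereRow ≃ₗ[SphereRing] (Fin 2 → SphereRing)) ∧
    -- a surjection `P → A` yields `h₁, h₂, h₃` with
    -- `x h₁ + y h₂ + z h₃ = 0` and `⟨h₁, h₂, h₃⟩ = A`
    ∃ h : Fin 3 → MvPolynomial (Fin 3) ℝ,
      sphereMk (X 0 * h 0 + X 1 * h 1 + X 2 * h 2) = 0 ∧
      Ideal.span {sphereMk (h 0), sphereMk (h 1), sphereMk (h 2)} = ⊤ ∧
      -- evaluating at points of `S²` gives a nowhere-vanishing tangent vector field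
      ∀ p : Fin 3 → ℝ, p 0 ^ 2 + p 1 ^ 2 + p 2 ^ 2 = 1 →
        (∑ i, p i * MvPolynomial.eval p (h i)) = 0 ∧ ∃ i, MvPolynomial.eval p (h i) ≠ 0 := by
  obtain ⟨M, hM, hM0⟩ := hcompl
  obtain ⟨c, hc0, hc1⟩ := M.exists_dotProduct_row_eq_zero_and_eq_one hM
  choose h hh using fun i => sphereMk_surjective (c i)
  have hrow : sphereRow = (Matrix.of ![M 0]).mulVecLin := by rw [sphereRow, hM0]
  have htangent : sphereMk (X 0 * h 0 + X 1 * h 1 + X 2 * h 2) = 0 := by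
    simpa [hh, hM0, dotProduct, Fin.sum_univ_three] using hc0
  refine ⟨hrow ▸ nonempty_ker_rowMulVecLin_equiv M hM, h, htangent, ?_, fun p hp => ⟨?_, ?_⟩⟩
  · have hrange : Set.range c = {c 0, c 1, c 2} := by
      ext; simp [Fin.exists_fin_succ, eq_comm]
    rw [hh, hh, hh, ← hrange]
    exact Ideal.span_range_eq_top_of_dotProduct_eq_one hc1
  · simpa [Fin.sum_univ_three] using congrArg (sphereEval p hp) htangent
  · have := congrArg (sphereEval p hp) hc1
    rw [RingHom.map_dotProduct, map_one] at this
    obtain ⟨i, hi⟩ := exists_ne_zero_of_dotProduct_eq_one this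
    exact ⟨i, by simpa [← hh] using hi⟩
end

section
/- (Swan–Towber) Let A be a commutative ring and (a, b, c) ∈ A³ a unimodular row. Then (a², b, c) is completable: there exists a matrix in SL_3(A) with first row (a², b, c). -/
/-!
For arbitrary `a', b', c'`, the Swan–Towber matrix with first row `(a², b, c)` has determinant
`(a a' + b b' + c c')²` as a polynomial identity, so it lies in `SL₃(A)` as soon as
`(a', b', c')` witnesses the unimodularity of `(a, b, c)`.
-/

section SwanTowber

variable {A : Type*} [CommRing A] (a b c a' b' c' : A)

def swanTowberMatrix : Matrix (Fin 3) (Fin 3) A :=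
  !![a ^ 2, b, c;
     -2 * a * c' - b, c' ^ 2, -(b' * c') + a';
     2 * a * b' - c, -(b' * c') - a', b' ^ 2]

theorem swanTowberMatrix_det :
    (swanTowberMatrix a b c a' b' c').det = (a * a' + b * b' + c * c') ^ 2 := by
  rw [Matrix.det_fin_three]
  simp only [swanTowberMatrix, Matrix.of_apply, Matrix.cons_val_zero, Matrix.cons_val_one,
    Matrix.cons_val_two, Matrix.head_cons, Matrix.tail_cons]
  ring

theorem swanTowberMatrix_row_zero : swanTowberMatrix a b c a' b' c' 0 = ![a ^ 2, b, c] := by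
  ext i
  fin_cases i <;> rfl

end SwanTowber

theorem stmt_15 {A : Type*} [CommRing A] (a b c : A)
    (h : ∃ a' b' c' : A, a * a' + b * b' + c * c' = 1) :
    ∃ M : Matrix (Fin 3) (Fin 3) A, M.det = 1 ∧ M 0 = ![a ^ 2, b, c] := by
  obtain ⟨a', b', c', hunit⟩ := h
  refine ⟨swanTowberMatrix a b c a' b' c', ?_, swanTowberMatrix_row_zero a b c a' b' c'⟩
  rw [swanTowberMatrix_det, hunit, one_pow]
end
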